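/- Let n ≥ 3 and let 1 ≤ i ≤ n−1. Then in B_{2n−2} one has θ′((s_i s_{i−1} ⋯ s_2) s_1 (s_2⁻¹ s_3⁻¹ ⋯ s_i⁻¹)) = a_{i+n−1,i}, where for i = 1 the left-hand side is θ′(s_1). -/

import Mathlib

namespace Braid

/-- The braid relations on `m` generators (0-indexed; generator `i` is `σ_{i+1}`). -/
def braidRels (m : ℕ) : Set (FreeGroup (Fin m)) :=
  { r | (∃ i j : Fin m, i.val + 1 < j.val ∧
          r = FreeGroup.of i * FreeGroup.of j * (FreeGroup.of j * FreeGroup.of i)⁻¹) ∨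
        (∃ i j : Fin m, j.val = i.val + 1 ∧
          r = FreeGroup.of i * FreeGroup.of j * FreeGroup.of i *
              (FreeGroup.of j * FreeGroup.of i * FreeGroup.of j)⁻¹) }

/-- The braid group `B_n`, presented with generators `σ_1, …, σ_{n-1}` and the braid relations. -/
abbrev BraidGroup (n : ℕ) : Type := PresentedGroup (braidRels (n - 1))

/-- The Artin generator `σ_k` of `B_n`, for `1 ≤ k ≤ n - 1` (junk value `1` otherwise). -/
def σ (n : ℕ) (k : ℕ) : BraidGroup n :=
  if h : 1 ≤ k ∧ k ≤ n - 1 then PresentedGroup.of ⟨k - 1, by omega⟩ else 1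

/-- `sigmaBr n j i = σ_{j-1} σ_{j-2} ⋯ σ_i` (the identity when `j ≤ i`);
this is the element `σ_{[j→i]}`. -/
def sigmaBr (n : ℕ) (j i : ℕ) : BraidGroup n :=
  ((List.range (j - i)).map (fun k => σ n (j - 1 - k))).prod

/-- `δ = σ_{n-1} σ_{n-2} ⋯ σ_1 ∈ B_n`. -/
def braidDelta (n : ℕ) : BraidGroup n := sigmaBr n n 1

/-- `ε = σ_1 (σ_{n-1} σ_{n-2} ⋯ σ_1) ∈ B_n`. -/
def braidEps (n : ℕ) : BraidGroup n := σ n 1 * braidDelta n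

/-- The half twist `Δ = σ_1 (σ_2 σ_1) ⋯ (σ_{n-1} ⋯ σ_1) ∈ B_n`. -/
def halfTwist (n : ℕ) : BraidGroup n :=
  ((List.range (n - 1)).map (fun j => sigmaBr n (j + 2) 1)).prod

/-- An element `X ∈ B_n` is periodic if `X^m = Δ^{2j}` for some `m ≥ 1` and some integer `j`. -/
def IsPeriodic {n : ℕ} (X : BraidGroup n) : Prop :=
  ∃ m : ℕ, 1 ≤ m ∧ ∃ j : ℤ, X ^ m = halfTwist n ^ (2 * j)

/-- The submonoid of positive braids, generated by `σ_1, …, σ_{n-1}`. -/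
def positiveMonoid (n : ℕ) : Submonoid (BraidGroup n) :=
  Submonoid.closure { x | ∃ k, 1 ≤ k ∧ k ≤ n - 1 ∧ x = σ n k }

/-- An element `s ∈ B_n` is simple if both `s` and `s⁻¹Δ` are positive braids. -/
def IsSimpleElt {n : ℕ} (s : BraidGroup n) : Prop :=
  s ∈ positiveMonoid n ∧ s⁻¹ * halfTwist n ∈ positiveMonoid n

lemma swap_comm_of_ne {a b c d : ℕ} (h1 : a ≠ c) (h2 : a ≠ d) (h3 : b ≠ c) (h4 : b ≠ d) :
    Equiv.swap a b * Equiv.swap c d = Equiv.swap c d * Equiv.swap a b := by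
  ext x
  simp only [Equiv.Perm.mul_apply, Equiv.swap_apply_def]
  split_ifs <;> omega

set_option maxHeartbeats 1000000 in
lemma braid_swap (a : ℕ) :
    Equiv.swap a (a + 1) * Equiv.swap (a + 1) (a + 2) * Equiv.swap a (a + 1) =
      Equiv.swap (a + 1) (a + 2) * Equiv.swap a (a + 1) * Equiv.swap (a + 1) (a + 2) := by
  ext x
  simp only [Equiv.Perm.mul_apply, Equiv.swap_apply_def]
  split_ifs <;> omega

/-- The homomorphism `π : B_n → Sym(ℕ)` sending `σ_k` to the transposition `(k, k+1)`. -/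
def permHom (n : ℕ) : BraidGroup n →* Equiv.Perm ℕ :=
  PresentedGroup.toGroup (f := fun i : Fin (n - 1) => Equiv.swap (i.val + 1) (i.val + 2))
    (by
      rintro r (⟨i, j, hij, rfl⟩ | ⟨i, j, hij, rfl⟩) <;>
        simp only [map_mul, map_inv, FreeGroup.lift_apply_of, mul_inv_eq_one]
      · exact swap_comm_of_ne (by omega) (by omega) (by omega) (by omega)
      · rw [hij]
        exact braid_swap (i.val + 1))

/-- The exponent-sum homomorphism, multiplicatively valued. -/
def expSumHom (n : ℕ) : BraidGroup n →* Multiplicative ℤ :=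
  PresentedGroup.toGroup (f := fun _ : Fin (n - 1) => Multiplicative.ofAdd (1 : ℤ))
    (by
      rintro r (⟨i, j, hij, rfl⟩ | ⟨i, j, hij, rfl⟩) <;>
        simp only [map_mul, map_inv, FreeGroup.lift_apply_of] <;> group)

/-- The exponent sum `e : B_n → ℤ`. -/
def e {n : ℕ} (X : BraidGroup n) : ℤ := Multiplicative.toAdd (expSumHom n X)

end Braid

namespace Braid

/-- Defining relations of the Artin–Tits group of type `B` on `m` generators
(0-indexed; generator `i` is `s_{i+1}`). -/
def typeBRels (m : ℕ) : Set (FreeGroup (Fin m)) :=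
  { r | (∃ i j : Fin m, i.val + 1 < j.val ∧
          r = FreeGroup.of i * FreeGroup.of j * (FreeGroup.of j * FreeGroup.of i)⁻¹) ∨
        (∃ i j : Fin m, j.val = i.val + 1 ∧ 1 ≤ i.val ∧
          r = FreeGroup.of i * FreeGroup.of j * FreeGroup.of i *
              (FreeGroup.of j * FreeGroup.of i * FreeGroup.of j)⁻¹) ∨
        (∃ i j : Fin m, i.val = 0 ∧ j.val = 1 ∧
          r = FreeGroup.of i * FreeGroup.of j * FreeGroup.of i * FreeGroup.of j *
              (FreeGroup.of j * FreeGroup.of i * FreeGroup.of j * FreeGroup.of i)⁻¹) }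

/-- The Artin–Tits group `A(B_m)` of type `B` with `m` generators `s_1, …, s_m`. -/
abbrev ArtinTitsB (m : ℕ) : Type := PresentedGroup (typeBRels m)

/-- The generator `s_k` of `A(B_m)`, for `1 ≤ k ≤ m` (junk value `1` otherwise). -/
def sGen (m : ℕ) (k : ℕ) : ArtinTitsB m :=
  if h : 1 ≤ k ∧ k ≤ m then PresentedGroup.of ⟨k - 1, by omega⟩ else 1

/-- The band generator `a_{t,s} = (σ_{t-1}⋯σ_{s+1}) σ_s (σ_{s+1}⁻¹⋯σ_{t-1}⁻¹) ∈ B_m`. -/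
def bandGen (m : ℕ) (t s : ℕ) : BraidGroup m :=
  sigmaBr m t (s + 1) * σ m s * (sigmaBr m t (s + 1))⁻¹

end Braid

/-! On generators, `θ'` sends `s_{j+1}` to `σ_j σ_{j+n-1}` (`a_{t+1,t} = σ_t`). In any braid
group, conjugating `a_{t,s}` by `σ_t` gives `a_{t+1,s}`, and conjugating it by `σ_s` gives
`a_{t,s+1}` (`σ_s` commutes with `σ_{t-1} ⋯ σ_{s+2}` and braids with `σ_{s+1}`). Hence
conjugation by `θ'(s_{i+1})` turns `a_{i+n-1,i}` into `a_{i+n,i+1}`, and the claim follows by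
induction on `i`. -/

theorem conj_mul_conj_of_commute_of_braid {G : Type*} [Group G] {a b V : G} (hV : Commute a V)
    (hab : a * b * a = b * a * b) :
    a * (V * b * a * (V * b)⁻¹) * a⁻¹ = V * b * V⁻¹ :=
  calc a * (V * b * a * (V * b)⁻¹) * a⁻¹
      = (a * V) * (b * a * b⁻¹) * (a * V)⁻¹ := by group
    _ = V * (a * b * a) * (b⁻¹ * a⁻¹) * V⁻¹ := by rw [hV.eq]; group
    _ = V * b * V⁻¹ := by rw [hab]; group

namespace Braid

theorem σ_eq_of {m k : ℕ} (h : 1 ≤ k ∧ k ≤ m - 1) :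
    σ m k = PresentedGroup.of ⟨k - 1, by omega⟩ :=
  dif_pos h

theorem σ_eq_one {m k : ℕ} (h : ¬(1 ≤ k ∧ k ≤ m - 1)) : σ m k = 1 :=
  dif_neg h

theorem commute_σ_σ {m s k : ℕ} (h : s + 2 ≤ k) : Commute (σ m s) (σ m k) := by
  by_cases hs : 1 ≤ s ∧ s ≤ m - 1
  · by_cases hk : 1 ≤ k ∧ k ≤ m - 1
    · rw [σ_eq_of hs, σ_eq_of hk]
      exact PresentedGroup.mk_eq_mk_of_mul_inv_mem (Or.inl ⟨_, _, by simp only; omega, rfl⟩)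
    · rw [σ_eq_one hk]
      exact Commute.one_right _
  · rw [σ_eq_one hs]
    exact Commute.one_left _

theorem σ_braid {m k : ℕ} (h1 : 1 ≤ k) (h2 : k + 1 ≤ m - 1) :
    σ m k * σ m (k + 1) * σ m k = σ m (k + 1) * σ m k * σ m (k + 1) := by
  rw [σ_eq_of ⟨h1, by omega⟩, σ_eq_of ⟨by omega, h2⟩]
  exact PresentedGroup.mk_eq_mk_of_mul_inv_mem (Or.inr ⟨_, _, by simp only; omega, rfl⟩)

theorem sigmaBr_of_le (m : ℕ) {j i : ℕ} (h : j ≤ i) : sigmaBr m j i = 1 := by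
  simp [sigmaBr, Nat.sub_eq_zero_of_le h]

theorem sigmaBr_succ_left (m : ℕ) {j i : ℕ} (h : i ≤ j) :
    sigmaBr m (j + 1) i = σ m j * sigmaBr m j i := by
  rw [sigmaBr, show j + 1 - i = j - i + 1 by omega, List.range_succ_eq_map, List.map_cons,
    List.prod_cons, List.map_map, sigmaBr]
  congr 2
  exact List.map_congr_left fun k _ => congrArg (σ m) (by omega)

theorem sigmaBr_succ_right (m : ℕ) {j i : ℕ} (h : i < j) :
    sigmaBr m j i = sigmaBr m j (i + 1) * σ m i := by
  rw [sigmaBr, show j - i = j - (i + 1) + 1 by omega, List.range_succ, List.map_append,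
    List.prod_append, sigmaBr]
  simp only [List.map_cons, List.map_nil, List.prod_cons, List.prod_nil, mul_one]
  congr 2
  omega

theorem commute_σ_sigmaBr (m : ℕ) {s j : ℕ} (t : ℕ) (h : s + 2 ≤ j) :
    Commute (σ m s) (sigmaBr m t j) := by
  refine Commute.list_prod_right _ _ fun x hx => ?_
  obtain ⟨k, hk, rfl⟩ := List.mem_map.mp hx
  exact commute_σ_σ (by simp only [List.mem_range] at hk; omega)

theorem bandGen_succ_self (m j : ℕ) : bandGen m (j + 1) j = σ m j := by
  simp [bandGen, sigmaBr_of_le]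

theorem σ_conj_bandGen_of_lt (m : ℕ) {s t : ℕ} (h : s < t) :
    σ m t * bandGen m t s * (σ m t)⁻¹ = bandGen m (t + 1) s := by
  rw [bandGen, bandGen, sigmaBr_succ_left m h]
  group

theorem σ_conj_bandGen_self (m : ℕ) {s t : ℕ} (hs : 1 ≤ s) (hst : s + 2 ≤ t)
    (hm : s + 1 ≤ m - 1) :
    σ m s * bandGen m t s * (σ m s)⁻¹ = bandGen m t (s + 1) := by
  rw [bandGen, bandGen, sigmaBr_succ_right m (by omega : s + 1 < t)]
  exact conj_mul_conj_of_commute_of_braid (commute_σ_sigmaBr m t le_rfl) (σ_braid hs hm)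

theorem σ_mul_σ_conj_bandGen (m : ℕ) {s t : ℕ} (hs : 1 ≤ s) (hst : s < t)
    (hm : s + 1 ≤ m - 1) :
    σ m s * σ m t * bandGen m t s * (σ m s * σ m t)⁻¹ = bandGen m (t + 1) (s + 1) := by
  calc σ m s * σ m t * bandGen m t s * (σ m s * σ m t)⁻¹
      = σ m s * (σ m t * bandGen m t s * (σ m t)⁻¹) * (σ m s)⁻¹ := by group
    _ = bandGen m (t + 1) (s + 1) := by
      rw [σ_conj_bandGen_of_lt m hst, σ_conj_bandGen_self m hs (by omega) hm]

end Braid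

theorem List.prod_range_succ_sub_mul_mul_prod_range_inv {G : Type*} [Group G] (f : ℕ → G)
    (x : G) (m : ℕ) :
    ((List.range (m + 1)).map fun k => f (m + 1 + 1 - k)).prod * x *
        ((List.range (m + 1)).map fun k => (f (2 + k))⁻¹).prod =
      f (m + 2) * (((List.range m).map fun k => f (m + 1 - k)).prod * x *
        ((List.range m).map fun k => (f (2 + k))⁻¹).prod) * (f (m + 2))⁻¹ := by
  have hleft : ((List.range (m + 1)).map fun k => f (m + 1 + 1 - k)).prod =
      f (m + 2) * ((List.range m).map fun k => f (m + 1 - k)).prod := by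
    rw [List.range_succ_eq_map, List.map_cons, List.prod_cons, List.map_map]
    congr 2
    exact List.map_congr_left fun k _ => congrArg f (by omega)
  have hright : ((List.range (m + 1)).map fun k => (f (2 + k))⁻¹).prod =
      ((List.range m).map fun k => (f (2 + k))⁻¹).prod * (f (m + 2))⁻¹ := by
    simp [List.range_succ, add_comm]
  rw [hleft, hright]
  group

theorem theta_of_conjugated_s1_general (n : ℕ) (i : ℕ) (hi1 : 1 ≤ i) (hi : i ≤ n - 1)
    (θ' : Braid.ArtinTitsB (n - 1) →* Braid.BraidGroup (2 * n - 2))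
    (hθ1 : θ' (Braid.sGen (n - 1) 1) = Braid.bandGen (2 * n - 2) n 1)
    (hθ2 : ∀ j, 2 ≤ j → j ≤ n - 1 →
      θ' (Braid.sGen (n - 1) j) =
        Braid.bandGen (2 * n - 2) j (j - 1) *
        Braid.bandGen (2 * n - 2) (j + n - 1) (j + n - 2)) :
    θ' (((List.range (i - 1)).map (fun k => Braid.sGen (n - 1) (i - k))).prod *
        Braid.sGen (n - 1) 1 *
        ((List.range (i - 1)).map (fun k => (Braid.sGen (n - 1) (2 + k))⁻¹)).prod) =
      Braid.bandGen (2 * n - 2) (i + n - 1) i := by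
  obtain ⟨m, rfl⟩ := Nat.exists_eq_add_of_le' hi1
  clear hi1
  simp only [Nat.add_sub_cancel]
  induction m with
  | zero => simpa [show 0 + 1 + n - 1 = n by omega] using hθ1
  | succ m ih =>
    have hθ : θ' (Braid.sGen (n - 1) (m + 2)) =
        Braid.σ (2 * n - 2) (m + 1) * Braid.σ (2 * n - 2) (m + 1 + n - 1) := by
      rw [hθ2 (m + 2) (by omega) hi, ← Braid.bandGen_succ_self, ← Braid.bandGen_succ_self]
      congr 2 <;> omega
    rw [List.prod_range_succ_sub_mul_mul_prod_range_inv, map_mul, map_mul, map_inv,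
      ih (by omega), hθ, Braid.σ_mul_σ_conj_bandGen _ (by omega) (by omega) (by omega)]
    congr 1
    omega

/-- for `1 ≤ i ≤ n-1`, one has
`θ'((s_i⋯s_2) s_1 (s_2⁻¹⋯s_i⁻¹)) = a_{i+n-1,i}` in `B_{2n-2}`. -/
theorem theta_of_conjugated_s1 (n : ℕ) (hn : 3 ≤ n) (i : ℕ) (hi1 : 1 ≤ i) (hi : i ≤ n - 1)
    (θ' : Braid.ArtinTitsB (n - 1) →* Braid.BraidGroup (2 * n - 2))
    (hθ1 : θ' (Braid.sGen (n - 1) 1) = Braid.bandGen (2 * n - 2) n 1)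
    (hθ2 : ∀ j, 2 ≤ j → j ≤ n - 1 →
      θ' (Braid.sGen (n - 1) j) =
        Braid.bandGen (2 * n - 2) j (j - 1) *
        Braid.bandGen (2 * n - 2) (j + n - 1) (j + n - 2)) :
    θ' (((List.range (i - 1)).map (fun k => Braid.sGen (n - 1) (i - k))).prod *
        Braid.sGen (n - 1) 1 *
        ((List.range (i - 1)).map (fun k => (Braid.sGen (n - 1) (2 + k))⁻¹)).prod) =
      Braid.bandGen (2 * n - 2) (i + n - 1) i :=
  theta_of_conjugated_s1_general n i hi1 hi θ' hθ1 hθ2
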